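/- Let N ≥ 1 and let M be any real N×N matrix. Then the minimum over all orthogonal N×N matrices R of Σ_{i=1}^N |⟨M R e_i, R e_i⟩| equals |tr M|; that is, |tr M| is a lower bound for this quantity over all orthogonal R, and the bound is attained by some orthogonal matrix R. -/

import Mathlib

/-!
For every orthogonal `R` the vectors `R eᵢ` form an orthonormal basis, so `∑ᵢ ⟨M R eᵢ, R eᵢ⟩ = tr M`
and the triangle inequality gives the lower bound. For attainment, every operator `T` on an
`n`-dimensional real inner product space has an orthonormal basis in which all diagonal entries
`⟨T bᵢ, bᵢ⟩` equal `tr T / n`. Indeed, the diagonal entries in any orthonormal basis average to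
`tr T / n`, so this mean lies between two of them, and since the unit sphere is connected in
dimension at least two, some unit vector `v` has `⟨T v, v⟩ = tr T / n`;
one then recurses on the compression of `T` to `(ℝ ∙ v)ᗮ`, whose trace is `tr T - tr T / n`.
-/

open scoped RealInnerProductSpace Matrix

open Module

section Orthonormal

variable {𝕜 E ι : Type*} [RCLike 𝕜] [NormedAddCommGroup E] [InnerProductSpace 𝕜 E]

theorem Orthonormal.exists_orthonormalBasis_coe_eq [FiniteDimensional 𝕜 E] [Fintype ι]
    {v : ι → E} (hv : Orthonormal 𝕜 v) (card_ι : finrank 𝕜 E = Fintype.card ι) :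
    ∃ b : OrthonormalBasis ι 𝕜 E, ⇑b = v := by
  obtain ⟨b, hb⟩ := (hv.comp _ Subtype.val_injective).exists_orthonormalBasis_extension_of_card_eq
    card_ι (s := Set.univ)
  exact ⟨b, funext fun i => hb i trivial⟩

theorem orthonormal_fin_cons {n : ℕ} {v : E} (hv : ‖v‖ = 1) {g : Fin n → E}
    (hg : Orthonormal 𝕜 g) (hvg : ∀ i, inner 𝕜 v (g i) = 0) :
    Orthonormal 𝕜 (Fin.cons v g : Fin (n + 1) → E) := by
  refine ⟨Fin.cases hv hg.1, fun {i j} hij => ?_⟩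
  cases i using Fin.cases <;> cases j using Fin.cases
  · exact absurd rfl hij
  · exact hvg _
  · simpa [inner_eq_zero_symm] using hvg _
  · exact hg.2 fun h => hij (congrArg Fin.succ h)

theorem OrthonormalBasis.exists_coe_eq_fin_cons [FiniteDimensional 𝕜 E] {n : ℕ} {v : E}
    (hv : ‖v‖ = 1) (b : OrthonormalBasis (Fin n) 𝕜 (𝕜 ∙ v)ᗮ) :
    ∃ b' : OrthonormalBasis (Fin (n + 1)) 𝕜 E, ⇑b' = Fin.cons v fun i => (b i : E) := by
  have hv₀ : v ≠ 0 := by rintro rfl; simp at hv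
  refine (orthonormal_fin_cons hv (b.orthonormal.comp_linearIsometry (𝕜 ∙ v)ᗮ.subtypeₗᵢ)
    fun i => Submodule.mem_orthogonal_singleton_iff_inner_right.mp (b i).2)
    |>.exists_orthonormalBasis_coe_eq ?_
  rw [← (𝕜 ∙ v).finrank_add_finrank_orthogonal, finrank_span_singleton hv₀,
    finrank_eq_card_basis b.toBasis, Fintype.card_fin, Fintype.card_fin, add_comm]

noncomputable def Submodule.compression (K : Submodule 𝕜 E) [K.HasOrthogonalProjection]
    (T : E →ₗ[𝕜] E) : K →ₗ[𝕜] K :=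
  K.orthogonalProjectionOnto.toLinearMap ∘ₗ T ∘ₗ K.subtype

theorem Submodule.inner_compression_apply (K : Submodule 𝕜 E) [K.HasOrthogonalProjection]
    (T : E →ₗ[𝕜] E) (x y : K) : inner 𝕜 x (K.compression T y) = inner 𝕜 (x : E) (T y) :=
  K.inner_orthogonalProjectionOnto_eq_of_mem_left x (T y)

end Orthonormal

section Real

variable {E : Type*} [NormedAddCommGroup E] [InnerProductSpace ℝ E] [FiniteDimensional ℝ E]

theorem LinearMap.trace_eq_inner_add_trace_compression (T : E →ₗ[ℝ] E) {v : E}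
    (hv : ‖v‖ = 1) :
    trace ℝ E T = ⟪T v, v⟫ + trace ℝ _ ((ℝ ∙ v)ᗮ.compression T) := by
  obtain ⟨b, hb⟩ := (stdOrthonormalBasis ℝ (ℝ ∙ v)ᗮ).exists_coe_eq_fin_cons hv
  rw [trace_eq_sum_inner T b, trace_eq_sum_inner _ (stdOrthonormalBasis ℝ _),
    Fin.sum_univ_succ, hb]
  simp only [Fin.cons_zero, Fin.cons_succ, Submodule.inner_compression_apply, real_inner_comm v]

theorem exists_norm_eq_one_inner_apply_self_eq_trace_div {ι : Type*} [Fintype ι] [Nonempty ι]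
    (T : E →ₗ[ℝ] E) (b : OrthonormalBasis ι ℝ E) :
    ∃ v : E, ‖v‖ = 1 ∧ ⟪T v, v⟫ = LinearMap.trace ℝ E T / Fintype.card ι := by
  set c := LinearMap.trace ℝ E T / Fintype.card ι
  have hmean : ∑ i, ⟪T (b i), b i⟫ = ∑ _i : ι, c := by
    simp only [Finset.sum_const, Finset.card_univ, nsmul_eq_mul, c]
    rw [mul_div_cancel₀ _ (by positivity), LinearMap.trace_eq_sum_inner T b]
    simp only [real_inner_comm]
  obtain ⟨i, -, hi⟩ := Finset.exists_le_of_sum_le Finset.univ_nonempty hmean.le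
  obtain ⟨j, -, hj⟩ := Finset.exists_le_of_sum_le Finset.univ_nonempty hmean.ge
  by_cases hij : i = j
  · subst hij
    exact ⟨b i, b.orthonormal.1 i, le_antisymm hi hj⟩
  have hrank : 1 < Module.rank ℝ E := by
    rw [← finrank_eq_rank, finrank_eq_card_basis b.toBasis]
    exact_mod_cast Fintype.one_lt_card_iff.mpr ⟨i, j, hij⟩
  have hcont : Continuous fun x : E => ⟪T x, x⟫ :=
    T.continuous_of_finiteDimensional.inner continuous_id
  obtain ⟨v, hv, hvc⟩ := (isConnected_sphere hrank 0 zero_le_one).isPreconnected.intermediate_value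
    (by simp [b.orthonormal.1 i]) (by simp [b.orthonormal.1 j]) hcont.continuousOn ⟨hi, hj⟩
  exact ⟨v, by simpa using hv, hvc⟩

theorem exists_orthonormalBasis_inner_apply_self_eq_trace_div {n : ℕ} (hn : finrank ℝ E = n)
    (T : E →ₗ[ℝ] E) :
    ∃ b : OrthonormalBasis (Fin n) ℝ E, ∀ i, ⟪T (b i), b i⟫ = LinearMap.trace ℝ E T / n := by
  induction n generalizing E with
  | zero => exact ⟨(stdOrthonormalBasis ℝ E).reindex (finCongr hn), fun i => i.elim0⟩
  | succ n ih =>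
    obtain ⟨v, hv, hvc⟩ := exists_norm_eq_one_inner_apply_self_eq_trace_div T
      ((stdOrthonormalBasis ℝ E).reindex (finCongr hn))
    rw [Fintype.card_fin] at hvc
    have hK : finrank ℝ (ℝ ∙ v)ᗮ = n := Submodule.finrank_add_finrank_orthogonal' <| by
      rw [finrank_span_singleton (by rintro rfl; simp at hv), hn, add_comm]
    obtain ⟨bK, hbK⟩ := ih hK ((ℝ ∙ v)ᗮ.compression T)
    obtain ⟨b, hb⟩ := bK.exists_coe_eq_fin_cons hv
    have htrace := T.trace_eq_inner_add_trace_compression hv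
    rw [hvc, ← sub_eq_iff_eq_add'] at htrace
    refine ⟨b, Fin.cases (by simpa [hb] using hvc) fun i => ?_⟩
    have hn₀ : (n : ℝ) ≠ 0 := by exact_mod_cast i.pos.ne'
    rw [hb, Fin.cons_succ, real_inner_comm, ← Submodule.inner_compression_apply, real_inner_comm,
      hbK i, ← htrace]
    push_cast
    field_simp
    ring

theorem isLeast_sum_abs_inner_apply_self {n : ℕ} (hn : finrank ℝ E = n) (T : E →ₗ[ℝ] E) :
    IsLeast {s | ∃ b : OrthonormalBasis (Fin n) ℝ E, s = ∑ i, |⟪T (b i), b i⟫|}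
      |LinearMap.trace ℝ E T| := by
  have htrace (b : OrthonormalBasis (Fin n) ℝ E) :
      LinearMap.trace ℝ E T = ∑ i, ⟪T (b i), b i⟫ := by
    simp only [LinearMap.trace_eq_sum_inner T b, real_inner_comm]
  obtain ⟨b, hb⟩ := exists_orthonormalBasis_inner_apply_self_eq_trace_div hn T
  refine ⟨⟨b, ?_⟩, fun s ⟨b', hs⟩ => ?_⟩
  · conv_lhs => rw [htrace b]
    simp [hb]
  · rw [hs, htrace b']
    exact Finset.abs_sum_le_sum_abs _ _

end Real

section Matrix

variable {𝕜 ι : Type*} [RCLike 𝕜] [Fintype ι] [DecidableEq ι]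

theorem Matrix.trace_toEuclideanLin (M : Matrix ι ι 𝕜) :
    LinearMap.trace 𝕜 _ (toEuclideanLin M) = M.trace := by
  rw [toEuclideanLin_eq_toLin_orthonormal, trace_toLin_eq]

theorem Matrix.toEuclideanLin_single (R : Matrix ι ι 𝕜) (i : ι) :
    toEuclideanLin R (EuclideanSpace.single i 1) = WithLp.toLp 2 (Rᵀ i) := by
  ext k
  simp [mulVec, dotProduct, Pi.single_apply]

theorem Matrix.orthonormal_toEuclideanLin_single {R : Matrix ι ι 𝕜} (h : Rᴴ * R = 1) :
    Orthonormal 𝕜 fun i => toEuclideanLin R (EuclideanSpace.single i 1) := by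
  rw [orthonormal_iff_ite]
  intro i j
  simp only [toEuclideanLin_single, inner_matrix_col_col, h, one_apply]

theorem OrthonormalBasis.toEuclideanLin_toMatrix_single
    (b : OrthonormalBasis ι 𝕜 (EuclideanSpace 𝕜 ι)) (i : ι) :
    Matrix.toEuclideanLin ((EuclideanSpace.basisFun ι 𝕜).toBasis.toMatrix b)
      (EuclideanSpace.single i 1) = b i := by
  ext k
  simp [Basis.toMatrix_apply]

theorem exists_orthogonal_iff_exists_orthonormalBasis {P : (ι → EuclideanSpace ℝ ι) → Prop} :
    (∃ R : Matrix ι ι ℝ, R * Rᵀ = 1 ∧ Rᵀ * R = 1 ∧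
        P fun i => Matrix.toEuclideanLin R (EuclideanSpace.single i 1)) ↔
      ∃ b : OrthonormalBasis ι ℝ (EuclideanSpace ℝ ι), P b := by
  constructor
  · rintro ⟨R, -, hR, hP⟩
    obtain ⟨b, hb⟩ := (Matrix.orthonormal_toEuclideanLin_single (R := R) (by simpa using hR))
      |>.exists_orthonormalBasis_coe_eq (by simp)
    exact ⟨b, hb ▸ hP⟩
  · rintro ⟨b, hP⟩
    set a := EuclideanSpace.basisFun ι ℝ
    refine ⟨a.toBasis.toMatrix b,
      by simpa using a.toMatrix_orthonormalBasis_self_mul_conjTranspose b,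
      by simpa using a.toMatrix_orthonormalBasis_conjTranspose_mul_self b, ?_⟩
    exact (funext b.toEuclideanLin_toMatrix_single).symm ▸ hP

end Matrix

theorem isLeast_sum_abs_quadratic_form_over_orthogonal_general
    (N : ℕ) (M : Matrix (Fin N) (Fin N) ℝ) :
    IsLeast {s : ℝ | ∃ R : Matrix (Fin N) (Fin N) ℝ, R * Rᵀ = 1 ∧ Rᵀ * R = 1 ∧
        s = ∑ i : Fin N,
          |⟪Matrix.toEuclideanLin M (Matrix.toEuclideanLin R (EuclideanSpace.single i 1)),
            Matrix.toEuclideanLin R (EuclideanSpace.single i 1)⟫|}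
      |M.trace| := by
  have h := isLeast_sum_abs_inner_apply_self finrank_euclideanSpace_fin (Matrix.toEuclideanLin M)
  rw [Matrix.trace_toEuclideanLin] at h
  convert h using 1
  ext s
  exact exists_orthogonal_iff_exists_orthonormalBasis
    (P := fun v => s = ∑ i, |⟪Matrix.toEuclideanLin M (v i), v i⟫|)

/-- For any real `N×N` matrix `M` (`N ≥ 1`), the minimum over orthogonal matrices `R` of
`Σᵢ |⟨M R eᵢ, R eᵢ⟩|` equals `|tr M|`: it is a lower bound and it is attained. -/
theorem isLeast_sum_abs_quadratic_form_over_orthogonal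
    (N : ℕ) (hN : 1 ≤ N) (M : Matrix (Fin N) (Fin N) ℝ) :
    IsLeast {s : ℝ | ∃ R : Matrix (Fin N) (Fin N) ℝ, R * Rᵀ = 1 ∧ Rᵀ * R = 1 ∧
        s = ∑ i : Fin N,
          |⟪Matrix.toEuclideanLin M (Matrix.toEuclideanLin R (EuclideanSpace.single i 1)),
            Matrix.toEuclideanLin R (EuclideanSpace.single i 1)⟫|}
      |M.trace| :=
  isLeast_sum_abs_quadratic_form_over_orthogonal_general N M
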